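/- In the 2×2 identity-payoff coordination game with u_1 = u_2 = I_2 (payoff 1 on the diagonal, 0 off-diagonal), any NE approximator f that is both player-permutation-equivariant and opponent-permutation-invariant must output the uniform mixed strategy (1/2, 1/2) for both players; in particular, neither pure Nash equilibrium can be output by f. -/
import Mathlib


open Finset

/-- `(ρ_i u)_j(a_i, a_{-i}) = u_j(ρ_i⁻¹ a_i, a_{-i})` for the 2×2 game. -/
def permPayoff (i : Fin 2) (ρ : Equiv.Perm (Fin 2))
    (u : Fin 2 → (Fin 2 → Fin 2) → ℝ) : Fin 2 → (Fin 2 → Fin 2) → ℝ :=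
  fun j a => u j (Function.update a i (ρ.symm (a i)))

/-- in the 2×2 identity coordination game, any NE approximator
that is player-permutation-equivariant and opponent-permutation-invariant and
outputs probability vectors must output the uniform strategy `(1/2, 1/2)` for
both players; in particular it cannot output any point-mass (pure) strategy. -/
theorem equivariant_approximator_uniform_on_coordination_game
    (f : (Fin 2 → (Fin 2 → Fin 2) → ℝ) → (Fin 2 → Fin 2 → ℝ))
    (hdist : ∀ (v : Fin 2 → (Fin 2 → Fin 2) → ℝ) (i : Fin 2),
      (∀ b, 0 ≤ f v i b) ∧ ∑ b, f v i b = 1)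
    (hPPE : ∀ (v : Fin 2 → (Fin 2 → Fin 2) → ℝ) (i : Fin 2) (ρ : Equiv.Perm (Fin 2)),
      f (permPayoff i ρ v) i = fun b => f v i (ρ.symm b))
    (hOPI : ∀ (v : Fin 2 → (Fin 2 → Fin 2) → ℝ) (i : Fin 2) (ρ : Equiv.Perm (Fin 2))
      (j : Fin 2), j ≠ i → f (permPayoff i ρ v) j = f v j)
    (u : Fin 2 → (Fin 2 → Fin 2) → ℝ)
    (hu : ∀ j a, u j a = if a 0 = a 1 then 1 else 0) :
    (∀ (i : Fin 2) (b : Fin 2), f u i b = 1 / 2) ∧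
    (∀ (i : Fin 2) (b : Fin 2), f u i ≠ fun c => if c = b then 1 else 0) := by
  set σ : Equiv.Perm (Fin 2) := Equiv.swap 0 1 with hσ
  have hveq : permPayoff 1 σ (permPayoff 0 σ u) = u := by
    funext j a
    simp only [permPayoff]
    rw [hu, hu]
    have h10 : (1 : Fin 2) ≠ 0 := by decide
    simp [Function.update_self, Function.update_of_ne h10,
      EmbeddingLike.apply_eq_iff_eq]
  have key : ∀ i : Fin 2, f u i 0 = f u i 1 := by
    intro i
    fin_cases i
    · have h1 : f (permPayoff 1 σ (permPayoff 0 σ u)) 0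
          = f (permPayoff 0 σ u) 0 := hOPI (permPayoff 0 σ u) 1 σ 0 (by decide)
      have h2 := hPPE u 0 σ
      have : f u 0 = fun b => f u 0 (σ.symm b) := by
        conv_lhs => rw [← hveq]
        rw [h1, h2]
      have := congrFun this 0
      simpa [hσ] using this
    · have h1 : f (permPayoff 0 σ u) 1 = f u 1 := hOPI u 0 σ 1 (by decide)
      have h2 := hPPE (permPayoff 0 σ u) 1 σ
      have : f u 1 = fun b => f u 1 (σ.symm b) := by
        conv_lhs => rw [← hveq]
        rw [h2, h1]
      have := congrFun this 0
      simpa [hσ] using this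
  have hsum : ∀ i : Fin 2, f u i 0 + f u i 1 = 1 := by
    intro i
    have := (hdist u i).2
    rwa [Fin.sum_univ_two] at this
  have hhalf : ∀ (i : Fin 2) (b : Fin 2), f u i b = 1 / 2 := by
    intro i b
    have hk := key i
    have hs := hsum i
    have h0 : f u i 0 = 1 / 2 := by linarith
    have h1' : f u i 1 = 1 / 2 := by linarith
    fin_cases b
    · exact h0
    · exact h1'
  refine ⟨hhalf, ?_⟩
  intro i b h
  have := hhalf i b
  rw [h] at this
  simp only [if_pos rfl] at this
  norm_num at this
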